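/- arXiv:1905.11283 — 4 statements merged into one kernel-verified Lean document; each statement's English description precedes it below -/
import Mathlib

section
/- Let n ∈ ℕ, ℓ ∈ ℤ, z ∈ ℂ, and define 𝔍(θ) = (i^n/2π) e^{i n (θ − π·sgn θ)} e^{i z cos θ} P(n, −i z (1 − cos θ)) for θ ∈ [−π, π]. Then the Fourier coefficients of 𝔍 satisfy the symmetry ∫_{−π}^{π} 𝔍(θ) e^{iℓθ} dθ = ∫_{−π}^{π} 𝔍(θ) e^{−i(ℓ+2n)θ} dθ. -/
open Complex Real MeasureTheory Filter Topology Finset intervalIntegral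

/-- Bessel function of the first kind `J_μ(z)`. -/
noncomputable def besselJ (μ z : ℂ) : ℂ :=
  (z / 2) ^ μ * ∑' k : ℕ, (-1) ^ k * (z / 2) ^ (2 * k) / ((k.factorial : ℂ) * Complex.Gamma (μ + k + 1))

/-- Modified Bessel function of the first kind `I_μ(z)`. -/
noncomputable def besselI (μ z : ℂ) : ℂ :=
  (z / 2) ^ μ * ∑' k : ℕ, (z / 2) ^ (2 * k) / ((k.factorial : ℂ) * Complex.Gamma (μ + k + 1))

/-- Tricomi's entire incomplete gamma function `γ*(ν,w)`. -/
noncomputable def gammaStar (ν w : ℂ) : ℂ :=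
  Complex.exp (-w) * ∑' m : ℕ, w ^ m / Complex.Gamma (ν + m + 1)

/-- Normalised lower incomplete gamma function `P(ν,w) = w^ν γ*(ν,w)`. -/
noncomputable def Pgamma (ν w : ℂ) : ℂ := w ^ ν * gammaStar ν w

/-- Nearest integer to `x`, with `⟨n+1/2⟩ = n`. -/
noncomputable def nearestInt (x : ℝ) : ℤ := ⌈x - 1 / 2⌉

/-- Complex fractional part `{μ} = μ - ⟨Re μ⟩`. -/
noncomputable def fracPart (μ : ℂ) : ℂ := μ - (nearestInt μ.re : ℂ)

/-- The corrective term `χ_μ(z)`; the sum is empty (hence `χ_μ(z) = 0`) when `Re μ > -1/2`. -/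
noncomputable def chi (μ z : ℂ) : ℂ :=
  Complex.I ^ μ / (Real.sqrt π : ℂ) * Complex.exp (Complex.I * z) *
    ∑ j ∈ Finset.Icc (1 : ℤ) (-(nearestInt μ.re)),
      Complex.Gamma ((j : ℂ) + μ - 1 / 2) /
          (Complex.Gamma (j : ℂ) * Complex.Gamma ((j : ℂ) + 2 * μ)) *
        (-2 * Complex.I * z) ^ ((j : ℂ) + μ - 1)

/-- The integral term `B_μ(z)`. -/
noncomputable def besselB (μ z : ℂ) : ℂ :=
  Complex.I ^ μ / (π : ℂ) * ∫ θ in (0 : ℝ)..π,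
    Complex.exp (-Complex.I * z * (Real.cos θ : ℂ)) *
      Pgamma (fracPart μ) (-Complex.I * z * (1 + (Real.cos θ : ℂ))) * Complex.cos (μ * θ)

/-- Error function. -/
noncomputable def cerf (z : ℂ) : ℂ :=
  (2 / (Real.sqrt π : ℂ)) * ∫ t in (0 : ℝ)..1, z * Complex.exp (-((t : ℂ) * z) ^ 2)

/-- Dawson's integral. -/
noncomputable def dawson (z : ℂ) : ℂ :=
  Complex.exp (-z ^ 2) * ∫ t in (0 : ℝ)..1, z * Complex.exp (((t : ℂ) * z) ^ 2)

/-- Spherical Bessel function of the first kind. -/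
noncomputable def sphericalJ (m : ℤ) (z : ℂ) : ℂ :=
  ((π : ℂ) / (2 * z)) ^ (1 / 2 : ℂ) * besselJ ((m : ℂ) + 1 / 2) z

/-- Upper incomplete gamma function `Γ(0,w)`. -/
noncomputable def Gamma0 (w : ℂ) : ℂ :=
  -(Real.eulerMascheroniConstant : ℂ) - Complex.log w -
    ∑' k : ℕ, (-w) ^ (k + 1) / (((k : ℂ) + 1) * ((k + 1).factorial : ℂ))

/-- The finite sum `σ_m(z)`. -/
noncomputable def sigmaSum (m : ℤ) (z : ℂ) : ℂ :=
  (-1 : ℂ) ^ m / (Real.sqrt π : ℂ) * Complex.exp (Complex.I * z) *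
    ∑ j ∈ Finset.Icc (1 : ℤ) |m|,
      Complex.Gamma (1 / 2 - (j : ℂ)) * Complex.Gamma ((j : ℂ) + ((|m| : ℤ) : ℂ)) /
          Complex.Gamma (((|m| : ℤ) : ℂ) - (j : ℂ) + 1) *
        (2 * Complex.I * z) ^ (-j)

/-!
Substituting `θ ↦ -θ` in the left-hand integral leaves the factors `e^{i z cos θ}` and
`P(n, -i z (1 - cos θ))` unchanged, while `sgn` is odd. The phase `e^{i n (θ - π sgn θ)}` at `-θ`
therefore equals its value at `θ` times `e^{-2 i n θ} e^{2π i n sgn θ}`, and the last factor is `1`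
because `n sgn θ` is an integer.
-/

theorem intervalIntegral_symmetric_eq_of_comp_neg {E : Type*} [NormedAddCommGroup E]
    [NormedSpace ℝ E] {f g : ℝ → E} (a : ℝ)
    (hfg : ∀ θ, f (-θ) = g θ) : ∫ θ in -a..a, f θ = ∫ θ in -a..a, g θ := by
  rw [← neg_neg a, ← intervalIntegral.integral_comp_neg, neg_neg]
  exact intervalIntegral.integral_congr fun θ _ => hfg θ

theorem Real.exists_intCast_eq_sign (θ : ℝ) : ∃ k : ℤ, Real.sign θ = k := by
  rcases Real.sign_apply_eq θ with h | h | h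
  exacts [⟨-1, by simp [h]⟩, ⟨0, by simp [h]⟩, ⟨1, by simp [h]⟩]

theorem exp_phase_neg_mul (n ℓ : ℤ) (θ : ℝ) :
    Complex.exp (Complex.I * n * (((-θ : ℝ) : ℂ) - π * (Real.sign (-θ) : ℂ))) *
        Complex.exp (Complex.I * ℓ * ((-θ : ℝ) : ℂ)) =
      Complex.exp (Complex.I * n * ((θ : ℂ) - π * (Real.sign θ : ℂ))) *
        Complex.exp (-Complex.I * (ℓ + 2 * n) * (θ : ℂ)) := by
  obtain ⟨k, hk⟩ := Real.exists_intCast_eq_sign θ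
  rw [← Complex.exp_add, ← Complex.exp_add, Real.sign_neg, hk]
  refine Complex.exp_eq_exp_iff_exists_int.2 ⟨n * k, ?_⟩
  push_cast
  ring

/-- Symmetry of the Fourier coefficients of `𝔍` for nonnegative integer order
(formula (2.5) of the paper). -/
theorem fourier_coeff_symm_int (n : ℕ) (ℓ : ℤ) (z : ℂ) (𝔍 : ℝ → ℂ)
    (h𝔍 : ∀ θ : ℝ, 𝔍 θ =
      Complex.I ^ n / (2 * (π : ℂ)) *
        Complex.exp (Complex.I * (n : ℂ) * ((θ : ℂ) - (π : ℂ) * (Real.sign θ : ℂ))) *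
        Complex.exp (Complex.I * z * (Real.cos θ : ℂ)) *
        Pgamma (n : ℂ) (-Complex.I * z * (1 - (Real.cos θ : ℂ)))) :
    (∫ θ in (-π : ℝ)..π, 𝔍 θ * Complex.exp (Complex.I * (ℓ : ℂ) * (θ : ℂ))) =
      ∫ θ in (-π : ℝ)..π, 𝔍 θ * Complex.exp (-Complex.I * ((ℓ : ℂ) + 2 * (n : ℂ)) * (θ : ℂ)) := by
  refine intervalIntegral_symmetric_eq_of_comp_neg π fun θ => ?_
  have hphase := exp_phase_neg_mul n ℓ θ
  rw [Int.cast_natCast] at hphase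
  rw [h𝔍 (-θ), h𝔍 θ, Real.cos_neg]
  linear_combination (Complex.I ^ n / (2 * (π : ℂ)) * Complex.exp (Complex.I * z * (Real.cos θ : ℂ)) *
    Pgamma (n : ℂ) (-Complex.I * z * (1 - (Real.cos θ : ℂ)))) * hphase
end

section
/- Let n ∈ ℕ, ℓ ∈ ℤ, z ∈ ℂ, set ν = n + 1/2, and define 𝔍(θ) = (i^ν/2π) e^{i ν (θ − π·sgn θ)} e^{i z cos θ} P(ν, −i z (1 − cos θ)) for θ ∈ [−π, π]. Then the Fourier coefficients of 𝔍 satisfy the antisymmetry ∫_{−π}^{π} 𝔍(θ) e^{iℓθ} dθ = − ∫_{−π}^{π} 𝔍(θ) e^{−i(ℓ+2n+1)θ} dθ. -/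
open Complex Real MeasureTheory Filter Topology Finset intervalIntegral

lemma exp_add_odd_mul_pi_mul_I {m : ℤ} (hm : Odd m) (B : ℂ) :
    Complex.exp (B + m * (π * Complex.I)) = -Complex.exp B := by
  rw [Complex.exp_add, Complex.exp_int_mul, Complex.exp_pi_mul_I, hm.neg_one_zpow, mul_neg_one]

/-- The jump of `sgn` at `0` contributes the factor `e^{±2πiν} = -1`. -/
lemma exp_sign_phase_comp_neg {ν : ℂ} {m : ℤ} (hm : Odd m) (hν : 2 * ν = m) (ℓ : ℂ) {θ : ℝ}
    (hθ : θ ≠ 0) :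
    Complex.exp (Complex.I * ν * ((-θ : ℝ) - π * (Real.sign (-θ) : ℂ))) *
        Complex.exp (Complex.I * ℓ * (-θ : ℝ)) =
      -(Complex.exp (Complex.I * ν * (θ - π * (Real.sign θ : ℂ))) *
        Complex.exp (-Complex.I * (ℓ + 2 * ν) * θ)) := by
  obtain ⟨k, hk, hsign⟩ : ∃ k : ℤ, Odd k ∧ (m : ℂ) * (Real.sign θ : ℂ) = k := by
    rcases Real.sign_apply_eq_of_ne_zero θ hθ with hs | hs
    · exact ⟨-m, hm.neg, by rw [hs]; push_cast; ring⟩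
    · exact ⟨m, hm, by rw [hs]; push_cast; ring⟩
  rw [← Complex.exp_add, ← Complex.exp_add, ← exp_add_odd_mul_pi_mul_I hk, ← hsign, ← hν,
    Real.sign_neg]
  push_cast
  ring_nf

theorem intervalIntegral.integral_symm_eq_neg_of_ae_comp_neg {E : Type*} [NormedAddCommGroup E]
    [NormedSpace ℝ E] {f g : ℝ → E} (a : ℝ) (h : ∀ᵐ x, f (-x) = -g x) :
    ∫ x in -a..a, f x = -∫ x in -a..a, g x := by
  rw [← neg_neg a, ← intervalIntegral.integral_comp_neg, neg_neg, ← intervalIntegral.integral_neg]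
  exact intervalIntegral.integral_congr_ae (h.mono fun x hx _ => hx)

/-- Antisymmetry of the Fourier coefficients of `𝔍` for nonnegative half-integer order
(formula (2.6) of the paper). -/
theorem fourier_coeff_antisymm_half_int (n : ℕ) (ℓ : ℤ) (z : ℂ) (𝔍 : ℝ → ℂ)
    (h𝔍 : ∀ θ : ℝ, 𝔍 θ =
      Complex.I ^ ((n : ℂ) + 1 / 2) / (2 * (π : ℂ)) *
        Complex.exp (Complex.I * ((n : ℂ) + 1 / 2) * ((θ : ℂ) - (π : ℂ) * (Real.sign θ : ℂ))) *
        Complex.exp (Complex.I * z * (Real.cos θ : ℂ)) *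
        Pgamma ((n : ℂ) + 1 / 2) (-Complex.I * z * (1 - (Real.cos θ : ℂ)))) :
    (∫ θ in (-π : ℝ)..π, 𝔍 θ * Complex.exp (Complex.I * (ℓ : ℂ) * (θ : ℂ))) =
      -∫ θ in (-π : ℝ)..π, 𝔍 θ *
          Complex.exp (-Complex.I * ((ℓ : ℂ) + 2 * (n : ℂ) + 1) * (θ : ℂ)) := by
  refine intervalIntegral.integral_symm_eq_neg_of_ae_comp_neg π ?_
  filter_upwards [Measure.ae_ne volume 0] with θ hθ
  have phase := exp_sign_phase_comp_neg (odd_two_mul_add_one (n : ℤ))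
    (ν := n + 1 / 2) (by push_cast; ring) ℓ hθ
  rw [h𝔍, h𝔍, Real.cos_neg, show (ℓ : ℂ) + 2 * n + 1 = ℓ + 2 * (n + 1 / 2) by ring]
  linear_combination (Complex.I ^ ((n : ℂ) + 1 / 2) / (2 * (π : ℂ)) *
    Complex.exp (Complex.I * z * (Real.cos θ : ℂ)) *
    Pgamma ((n : ℂ) + 1 / 2) (-Complex.I * z * (1 - (Real.cos θ : ℂ)))) * phase
end

section
/- Let μ ∈ ℂ with Re μ ≤ −1/2 and 2μ ∉ ℤ. Then, as x → +∞ along the positive real axis, χ_μ(x) is asymptotically equivalent to (i^{1+⟨Re μ⟩}/√π) · [Γ({μ}−1/2) / (Γ(−⟨Re μ⟩) Γ(μ+{μ}))] · (2x)^{{μ}−1} e^{i x}; that is, the ratio of χ_μ(x) to this expression tends to 1 as x → +∞. -/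
open Complex Real MeasureTheory Filter Topology Finset intervalIntegral

/-! For `Re μ ≤ -1/2` the sum defining `χ_μ(x)` runs over `j = 1, …, N` with `N = -⟨Re μ⟩ ≥ 1`,
and its terms are constant multiples of `(-2ix)^(j+μ-1)`, so as `x → ∞` the top term `j = N`
dominates: divided by it, every other term is a negative integer power of `-2ix`. Since
`(-2ix)^a = (2x)^a (-i)^a` for `x > 0` and `i^μ (-i)^({μ}-1) = i^(1+⟨Re μ⟩)`, the top term is
exactly the stated expression. Its coefficient `Γ({μ}-1/2) / (Γ(N) Γ(μ+{μ}))` is nonzero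
because `2μ ∉ ℤ` keeps `{μ}-1/2` and `μ+{μ} = 2μ-⟨Re μ⟩` off the poles of `Γ`. -/

namespace Complex

theorem ofReal_mul_cpow {r : ℝ} (hr : 0 < r) {z : ℂ} (hz : z ≠ 0) (a : ℂ) :
    ((r : ℂ) * z) ^ a = (r : ℂ) ^ a * z ^ a := by
  rw [cpow_def_of_ne_zero (mul_ne_zero (ofReal_ne_zero.mpr hr.ne') hz), log_ofReal_mul hr hz,
    add_mul, exp_add, ofReal_log hr.le, ← cpow_def_of_ne_zero (ofReal_ne_zero.mpr hr.ne'),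
    ← cpow_def_of_ne_zero hz]

theorem I_cpow_mul_neg_I_cpow_sub (μ ν : ℂ) : I ^ μ * (-I) ^ (μ - ν) = I ^ ν := by
  rw [cpow_def_of_ne_zero I_ne_zero, cpow_def_of_ne_zero (neg_ne_zero.mpr I_ne_zero),
    cpow_def_of_ne_zero I_ne_zero, log_I, log_neg_I, ← exp_add]
  ring_nf

theorem Gamma_ne_zero_of_forall_ne_intCast {s : ℂ} (hs : ∀ k : ℤ, s ≠ k) : Gamma s ≠ 0 :=
  Gamma_ne_zero fun m => by exact_mod_cast hs (-m)

end Complex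

theorem tendsto_zpow_cobounded_nhds_zero {𝕜 : Type*} [NormedDivisionRing 𝕜] {m : ℤ}
    (hm : m < 0) :
    Tendsto (fun z : 𝕜 => z ^ m) (Bornology.cobounded 𝕜) (𝓝 0) := by
  rw [tendsto_zero_iff_norm_tendsto_zero]
  simpa only [norm_zpow, Function.comp_def] using
    (tendsto_zpow_atTop_zero hm).comp tendsto_norm_cobounded_atTop

theorem tendsto_sum_mul_cpow_div_leading {α : Type*} {l : Filter α} {w : α → ℂ}
    (hw : Tendsto w l (Bornology.cobounded ℂ)) {s : Finset ℤ} {N : ℤ} (hN : N ∈ s)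
    (hmax : ∀ j ∈ s, j ≤ N) {a : ℤ → ℂ} (ha : a N ≠ 0) (β : ℂ) :
    Tendsto (fun t => (∑ j ∈ s, a j * w t ^ ((j : ℂ) + β)) / (a N * w t ^ ((N : ℂ) + β)))
      l (𝓝 1) := by
  have hterm : ∀ j ∈ s, Tendsto (fun t => a j / a N * w t ^ (j - N)) l
      (𝓝 (if j = N then 1 else 0)) := by
    intro j hj
    rcases eq_or_ne j N with rfl | hne
    · simpa [div_self ha] using tendsto_const_nhds
    · have hlt : j - N < 0 := by have := hmax j hj; omega
      simpa [if_neg hne] using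
        ((tendsto_zpow_cobounded_nhds_zero hlt).comp hw).const_mul (a j / a N)
  have hsum := tendsto_finsetSum s hterm
  rw [Finset.sum_ite_eq' s N (fun _ => (1 : ℂ)), if_pos hN] at hsum
  refine hsum.congr' ?_
  filter_upwards [hw.eventually_ne_cobounded 0] with t ht
  rw [Finset.sum_div]
  refine Finset.sum_congr rfl fun j _ => ?_
  rw [mul_div_mul_comm, ← Complex.cpow_sub _ _ ht, ← Complex.cpow_intCast]
  congr 2
  push_cast
  ring

theorem nearestInt_le_neg_one {x : ℝ} (hx : x ≤ -(1 / 2)) : nearestInt x ≤ -1 :=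
  Int.ceil_le.mpr (by push_cast; linarith)

noncomputable def chiCoef (μ : ℂ) (j : ℤ) : ℂ :=
  Complex.Gamma ((j : ℂ) + μ - 1 / 2) /
    (Complex.Gamma (j : ℂ) * Complex.Gamma ((j : ℂ) + 2 * μ))

theorem chi_eq_sum_chiCoef (μ z : ℂ) : chi μ z =
    Complex.I ^ μ / (Real.sqrt π : ℂ) * Complex.exp (Complex.I * z) *
      ∑ j ∈ Finset.Icc (1 : ℤ) (-(nearestInt μ.re)),
        chiCoef μ j * (-2 * Complex.I * z) ^ ((j : ℂ) + (μ - 1)) := by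
  simp only [chi, chiCoef, add_sub_assoc]

theorem chiCoef_neg_nearestInt (μ : ℂ) : chiCoef μ (-nearestInt μ.re) =
    Complex.Gamma (fracPart μ - 1 / 2) /
      (Complex.Gamma ((-(nearestInt μ.re) : ℤ) : ℂ) * Complex.Gamma (μ + fracPart μ)) := by
  have hshift : ((-nearestInt μ.re : ℤ) : ℂ) + μ - 1 / 2 = fracPart μ - 1 / 2 := by
    rw [fracPart]; push_cast; ring
  have hdouble : ((-nearestInt μ.re : ℤ) : ℂ) + 2 * μ = μ + fracPart μ := by
    rw [fracPart]; push_cast; ring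
  rw [chiCoef, hshift, hdouble]

theorem chiCoef_neg_nearestInt_ne_zero {μ : ℂ} (h1 : μ.re ≤ -(1 / 2))
    (h2 : ∀ k : ℤ, 2 * μ ≠ (k : ℂ)) : chiCoef μ (-nearestInt μ.re) ≠ 0 := by
  set n := nearestInt μ.re
  have hn : n ≤ -1 := nearestInt_le_neg_one h1
  refine div_ne_zero ?_ (mul_ne_zero ?_ ?_)
  · refine Complex.Gamma_ne_zero_of_forall_ne_intCast fun k h => h2 (2 * (k + n) + 1) ?_
    push_cast at h ⊢
    linear_combination 2 * h
  · exact Complex.Gamma_ne_zero_of_re_pos (by simp; omega)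
  · refine Complex.Gamma_ne_zero_of_forall_ne_intCast fun k h => h2 (k + n) ?_
    push_cast at h ⊢
    linear_combination h

theorem chi_leading_term_eq (μ : ℂ) {x : ℝ} (hx : 0 < x) :
    Complex.I ^ (1 + nearestInt μ.re) / (Real.sqrt π : ℂ) *
        (Complex.Gamma (fracPart μ - 1 / 2) /
          (Complex.Gamma ((-(nearestInt μ.re) : ℤ) : ℂ) * Complex.Gamma (μ + fracPart μ))) *
        (2 * (x : ℂ)) ^ (fracPart μ - 1) * Complex.exp (Complex.I * (x : ℂ)) =
      Complex.I ^ μ / (Real.sqrt π : ℂ) * Complex.exp (Complex.I * (x : ℂ)) *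
        (chiCoef μ (-nearestInt μ.re) *
          (-2 * Complex.I * (x : ℂ)) ^ (((-nearestInt μ.re : ℤ) : ℂ) + (μ - 1))) := by
  have hw : -2 * Complex.I * (x : ℂ) = ((2 * x : ℝ) : ℂ) * -Complex.I := by push_cast; ring
  have hexp : ((-nearestInt μ.re : ℤ) : ℂ) + (μ - 1) = fracPart μ - 1 := by
    rw [fracPart]; push_cast; ring
  have hphase : Complex.I ^ μ * (-Complex.I) ^ (fracPart μ - 1) =
      Complex.I ^ (1 + nearestInt μ.re) := by
    rw [← Complex.cpow_intCast,
      ← Complex.I_cpow_mul_neg_I_cpow_sub μ ((1 + nearestInt μ.re : ℤ) : ℂ), fracPart]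
    congr 2
    push_cast
    ring
  rw [hw, hexp, Complex.ofReal_mul_cpow (by positivity) (neg_ne_zero.mpr Complex.I_ne_zero),
    chiCoef_neg_nearestInt, ← hphase]
  push_cast
  ring

/-- Limiting form of the corrective term `χ_μ(z)` as `z → ∞` along the positive real
axis (formula (2.24) of the paper). -/
theorem chi_asymptotic_infty (μ : ℂ) (h1 : μ.re ≤ -(1 / 2)) (h2 : ∀ k : ℤ, 2 * μ ≠ (k : ℂ)) :
    Filter.Tendsto (fun x : ℝ => chi μ (x : ℂ) /
        (Complex.I ^ (1 + nearestInt μ.re) / (Real.sqrt π : ℂ) *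
          (Complex.Gamma (fracPart μ - 1 / 2) /
            (Complex.Gamma ((-(nearestInt μ.re) : ℤ) : ℂ) * Complex.Gamma (μ + fracPart μ))) *
          (2 * (x : ℂ)) ^ (fracPart μ - 1) * Complex.exp (Complex.I * (x : ℂ))))
      Filter.atTop (𝓝 1) := by
  have hw : Tendsto (fun x : ℝ => -2 * Complex.I * (x : ℂ)) atTop (Bornology.cobounded ℂ) := by
    refine tendsto_norm_atTop_iff_cobounded.mp ?_
    simpa using tendsto_abs_atTop_atTop.const_mul_atTop two_pos
  have hN : -nearestInt μ.re ∈ Finset.Icc (1 : ℤ) (-nearestInt μ.re) :=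
    Finset.mem_Icc.mpr ⟨by linarith [nearestInt_le_neg_one h1], le_rfl⟩
  refine (tendsto_sum_mul_cpow_div_leading hw hN (fun j hj => (Finset.mem_Icc.mp hj).2)
    (chiCoef_neg_nearestInt_ne_zero h1 h2) (μ - 1)).congr' ?_
  filter_upwards [eventually_gt_atTop 0] with x hx
  rw [chi_eq_sum_chiCoef, chi_leading_term_eq μ hx, mul_div_mul_left]
  simp [Real.sqrt_ne_zero'.mpr Real.pi_pos]
end

section
/- For every w ∈ ℂ∖(−∞,0], the limit lim_{a→0, a≠0} [P(a,w) − P(−a,w)] / sin(πa) = −(2/π) Γ(0,w) holds, the limit being taken over complex a tending to 0. -/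
open Complex Real MeasureTheory Filter Topology Finset intervalIntegral

/-! Both numerator and denominator vanish at `a = 0`, so the limit is `2 ∂ₐP(0,w) / π`.
Differentiating `P(a,w) = w^a e^{-w} ∑ w^m / Γ(a+m+1)` termwise and using
`(1/Γ)'(m+1) = (γ - H_m) / m!` gives `∂ₐP(0,w) = log w + γ - e^{-w} ∑ H_m w^m / m!`.
The identity `∑_{k=1}^n (-1)^k C(n,k) / k = -H_n` turns the last series into the Cauchy product
of `e^w` with `∑_{k≥1} (-w)^k / (k k!)`, which is exactly `-Γ(0,w) - γ - log w`. -/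

open Nat Metric

local notation "γ" => Real.eulerMascheroniConstant

theorem sum_range_neg_one_pow_mul_choose_succ (n : ℕ) :
    ∑ k ∈ range (n + 1), (-1 : ℚ) ^ k * (n + 1).choose (k + 1) = 1 := by
  have h := Int.alternating_sum_range_choose_of_ne n.succ_ne_zero
  rw [sum_range_succ'] at h
  simp only [pow_succ, pow_zero, mul_neg_one, neg_mul, sum_neg_distrib, choose_zero_right,
    Nat.cast_one, mul_one, succ_eq_add_one] at h
  have hℤ : ∑ k ∈ range (n + 1), (-1 : ℤ) ^ k * (n + 1).choose (k + 1) = 1 := by linarith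
  exact_mod_cast hℤ

theorem sum_range_neg_one_pow_mul_choose_div_succ (n : ℕ) :
    ∑ k ∈ range (n + 1), (-1 : ℚ) ^ k * n.choose k / (k + 1) = 1 / (n + 1) := by
  have hpascal (k : ℕ) : (-1 : ℚ) ^ k * n.choose k / (k + 1)
      = (-1 : ℚ) ^ k * (n + 1).choose (k + 1) / (n + 1) := by
    have h := congrArg (Nat.cast : ℕ → ℚ) (add_one_mul_choose_eq n k)
    push_cast at h
    field_simp
    linear_combination h
  rw [sum_congr rfl fun k _ => hpascal k, ← sum_div, sum_range_neg_one_pow_mul_choose_succ]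

-- The `k = 0` term is `1 / 0 = 0`.
theorem sum_range_neg_one_pow_mul_choose_div_eq_neg_harmonic (n : ℕ) :
    ∑ k ∈ range (n + 1), (-1 : ℚ) ^ k * n.choose k / k = -harmonic n := by
  induction n with
  | zero => simp
  | succ n ih =>
    have hshift : ∑ k ∈ range (n + 1), (-1 : ℚ) ^ (k + 1) * n.choose (k + 1) / (k + 1)
        = -harmonic n := by
      rw [sum_range_succ, ← ih, sum_range_succ' _ n]
      simp
    rw [sum_range_succ', harmonic_succ]
    simp only [choose_succ_succ', cast_add, cast_one, mul_add, add_div, sum_add_distrib, hshift]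
    simp only [pow_succ, mul_neg_one, neg_mul, neg_div, sum_neg_distrib,
      sum_range_neg_one_pow_mul_choose_div_succ]
    simp

theorem summable_norm_pow_div_factorial {𝕜 : Type*} [RCLike 𝕜] (x : 𝕜) :
    Summable fun k : ℕ => ‖x ^ k / (k ! : 𝕜)‖ := by
  simpa [norm_div, norm_pow] using Real.summable_pow_div_factorial ‖x‖

theorem norm_pow_div_mul_factorial_le {𝕜 : Type*} [RCLike 𝕜] (x : 𝕜) (k : ℕ) :
    ‖x ^ k / (k * k ! : 𝕜)‖ ≤ ‖x ^ k / (k ! : 𝕜)‖ := by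
  rcases k.eq_zero_or_pos with rfl | hk
  · simp
  rw [norm_div, norm_div, norm_mul]
  refine div_le_div_of_nonneg_left (norm_nonneg _) (by simp [k.factorial_pos]) ?_
  simpa using le_mul_of_one_le_left (by positivity) (by exact_mod_cast hk : (1 : ℝ) ≤ k)

theorem neg_pow_div_mul_factorial_mul_pow_div_factorial {K : Type*} [Field K] [CharZero K]
    (x : K) {k n : ℕ} (hkn : k ≤ n) :
    (-x) ^ k / (k * k ! : K) * (x ^ (n - k) / ((n - k)! : K))
      = ((-1) ^ k * n.choose k / k : ℚ) * (x ^ n / (n ! : K)) := by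
  rcases k.eq_zero_or_pos with rfl | hk
  · simp
  have hpow : x ^ n = x ^ k * x ^ (n - k) := by rw [← pow_add, Nat.add_sub_cancel' hkn]
  have hn : (n ! : K) ≠ 0 := Nat.cast_ne_zero.mpr n.factorial_ne_zero
  rw [neg_pow, hpow]
  push_cast
  rw [cast_choose K hkn]
  field_simp

theorem hasSum_harmonic_mul_pow_div_factorial (w : ℂ) :
    HasSum (fun n : ℕ => (harmonic n : ℂ) * (w ^ n / (n ! : ℂ)))
      (-((∑' k : ℕ, (-w) ^ (k + 1) / (((k : ℂ) + 1) * ((k + 1)! : ℂ))) * exp w)) := by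
  set A : ℕ → ℂ := fun k => (-w) ^ k / (k * k ! : ℂ)
  have hA : Summable fun k => ‖A k‖ :=
    (summable_norm_pow_div_factorial (-w)).of_nonneg_of_le (fun _ => norm_nonneg _)
      (norm_pow_div_mul_factorial_le (-w))
  have hA_tsum :
      ∑' k, A k = ∑' k : ℕ, (-w) ^ (k + 1) / (((k : ℂ) + 1) * ((k + 1)! : ℂ)) := by
    rw [hA.of_norm.tsum_eq_zero_add]
    simp [A]
  have hexp : ∑' k : ℕ, w ^ k / (k ! : ℂ) = exp w := by
    rw [exp_eq_exp_ℂ, (NormedSpace.expSeries_div_hasSum_exp w).tsum_eq]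
  have hprod := hasSum_sum_range_mul_of_summable_norm hA (summable_norm_pow_div_factorial w)
  rw [hA_tsum, hexp] at hprod
  have hterm (n : ℕ) : ∑ k ∈ range (n + 1), A k * (w ^ (n - k) / ((n - k)! : ℂ))
      = -(harmonic n * (w ^ n / (n ! : ℂ))) := by
    rw [sum_congr rfl fun k hk => neg_pow_div_mul_factorial_mul_pow_div_factorial w
      (Nat.lt_succ_iff.mp (mem_range.mp hk)), ← sum_mul, ← Rat.cast_sum,
      sum_range_neg_one_pow_mul_choose_div_eq_neg_harmonic, Rat.cast_neg, neg_mul]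
  simpa only [hterm, neg_neg] using hprod.neg

theorem tendsto_div_nhdsNE_of_hasDerivAt {𝕜 : Type*} [NontriviallyNormedField 𝕜]
    {f g : 𝕜 → 𝕜} {f' g' x : 𝕜} (hf : HasDerivAt f f' x) (hg : HasDerivAt g g' x)
    (hfx : f x = 0) (hgx : g x = 0) (hg' : g' ≠ 0) :
    Tendsto (fun y => f y / g y) (𝓝[≠] x) (𝓝 (f' / g')) := by
  refine ((hasDerivAt_iff_tendsto_slope.mp hf).div
    (hasDerivAt_iff_tendsto_slope.mp hg) hg').congr' ?_
  filter_upwards [self_mem_nhdsWithin] with y hy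
  have hy : y - x ≠ 0 := sub_ne_zero.mpr hy
  simp only [Pi.div_apply, slope_def_field, hfx, hgx, sub_zero]
  field_simp

theorem HasDerivAt.sub_comp_neg {𝕜 : Type*} [NontriviallyNormedField 𝕜]
    {f : 𝕜 → 𝕜} {f' : 𝕜} (hf : HasDerivAt f f' 0) :
    HasDerivAt (fun y => f y - f (-y)) (2 * f') 0 := by
  have hf₀ : HasDerivAt f f' (-0) := by rwa [neg_zero]
  have hneg : HasDerivAt (fun y => f (-y)) (-f') 0 := by
    simpa [Function.comp_def] using hf₀.comp 0 (hasDerivAt_neg' 0)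
  exact (hf.sub hneg).congr_deriv (by ring)

theorem norm_inv_Gamma_add_nat_le {a : ℂ} (ha : ‖a‖ ≤ 1 / 2) (m : ℕ) :
    ‖(Complex.Gamma (a + m + 1))⁻¹‖ ≤
      2 ^ m / m ! * ‖(Complex.Gamma (a + 1))⁻¹‖ := by
  induction m with
  | zero => simp
  | succ m ih =>
    have hs : (m + 1 : ℝ) / 2 ≤ ‖a + m + 1‖ := by
      have h := norm_sub_norm_le ((m + 1 : ℕ) : ℂ) (-a)
      rw [Complex.norm_natCast, norm_neg, sub_neg_eq_add] at h
      calc (m + 1 : ℝ) / 2 ≤ (m + 1 : ℕ) - ‖a‖ := by push_cast; linarith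
        _ ≤ ‖a + m + 1‖ := h.trans_eq (by congr 1; push_cast; ring)
    have hs₀ : 0 < ‖a + m + 1‖ := lt_of_lt_of_le (by positivity) hs
    rw [Nat.cast_succ, ← add_assoc]
    calc ‖(Complex.Gamma (a + m + 1 + 1))⁻¹‖
        = ‖(Complex.Gamma (a + m + 1))⁻¹‖ / ‖a + m + 1‖ := by
          rw [Complex.one_div_Gamma_eq_self_mul_one_div_Gamma_add_one (a + m + 1), norm_mul,
            mul_div_cancel_left₀ _ hs₀.ne']
      _ ≤ 2 ^ m / m ! * ‖(Complex.Gamma (a + 1))⁻¹‖ / ((m + 1) / 2) := by gcongr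
      _ = 2 ^ (m + 1) / (m + 1)! * ‖(Complex.Gamma (a + 1))⁻¹‖ := by
        push_cast [factorial_succ]
        field_simp
        ring

theorem hasDerivAt_inv_Gamma_nat_add_one (m : ℕ) :
    HasDerivAt (fun s => (Complex.Gamma s)⁻¹) ((γ - harmonic m) / m !) (m + 1) := by
  have hm : (m ! : ℂ) ≠ 0 := Nat.cast_ne_zero.mpr m.factorial_ne_zero
  refine ((Complex.hasDerivAt_Gamma_nat m).inv
    (by rwa [Complex.Gamma_nat_eq_factorial])).congr_deriv ?_
  rw [Complex.Gamma_nat_eq_factorial]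
  field_simp
  ring

theorem hasDerivAt_tsum_pow_div_Gamma (w : ℂ) :
    HasDerivAt (fun a : ℂ => ∑' m : ℕ, w ^ m / Complex.Gamma (a + m + 1))
      (∑' m : ℕ, w ^ m * ((γ - harmonic m) / m !)) 0 := by
  set F : ℕ → ℂ → ℂ := fun m a => w ^ m / Complex.Gamma (a + m + 1)
  have hcont : Continuous fun a : ℂ => (Complex.Gamma (a + 1))⁻¹ :=
    (Complex.differentiable_one_div_Gamma.comp (differentiable_id.add_const 1)).continuous
  obtain ⟨C, hC⟩ :=
    (isCompact_closedBall (0 : ℂ) (1 / 2)).exists_bound_of_continuousOn hcont.continuousOn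
  have hF_le (m : ℕ) (a : ℂ) (ha : a ∈ ball (0 : ℂ) (1 / 2)) :
      ‖F m a‖ ≤ C * ((2 * ‖w‖) ^ m / m !) := by
    have ha' : ‖a‖ ≤ 1 / 2 := (mem_ball_zero_iff.mp ha).le
    have hCa : ‖(Complex.Gamma (a + 1))⁻¹‖ ≤ C := hC a (mem_closedBall_zero_iff.mpr ha')
    calc ‖F m a‖ = ‖w‖ ^ m * ‖(Complex.Gamma (a + m + 1))⁻¹‖ := by
          simp [F, div_eq_mul_inv]
      _ ≤ ‖w‖ ^ m * (2 ^ m / m ! * C) := by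
        gcongr
        exact (norm_inv_Gamma_add_nat_le ha' m).trans (by gcongr)
      _ = C * ((2 * ‖w‖) ^ m / m !) := by ring
  have hsum : Summable fun m : ℕ => C * ((2 * ‖w‖) ^ m / m !) :=
    (Real.summable_pow_div_factorial _).mul_left C
  have hF_diff (m : ℕ) : DifferentiableOn ℂ (F m) (ball 0 (1 / 2)) :=
    ((Complex.differentiable_one_div_Gamma.comp
      ((differentiable_id.add_const _).add_const 1)).const_mul (w ^ m)).differentiableOn
  have h0 : (0 : ℂ) ∈ ball (0 : ℂ) (1 / 2) := mem_ball_self (by norm_num)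
  have hderiv (m : ℕ) : deriv (F m) 0 = w ^ m * ((γ - harmonic m) / m !) := by
    have hshift : HasDerivAt (fun a : ℂ => a + m + 1) 1 0 :=
      ((hasDerivAt_id 0).add_const _).add_const 1
    have h : HasDerivAt (F m) _ 0 :=
      ((hasDerivAt_inv_Gamma_nat_add_one m).comp_of_eq 0 hshift (by simp)).const_mul (w ^ m)
    simpa only [mul_one] using h.deriv
  have hS := (differentiableOn_tsum_of_summable_norm hsum hF_diff isOpen_ball hF_le)
    |>.differentiableAt (isOpen_ball.mem_nhds h0)
  have hS' := (hasSum_deriv_of_summable_norm hsum hF_diff isOpen_ball hF_le h0).tsum_eq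
  simp only [hderiv] at hS'
  exact hS' ▸ hS.hasDerivAt

theorem hasDerivAt_Pgamma_zero {w : ℂ} (hw : w ≠ 0) :
    HasDerivAt (fun a => Pgamma a w) (-Gamma0 w) 0 := by
  set T := ∑' k : ℕ, (-w) ^ (k + 1) / (((k : ℂ) + 1) * ((k + 1)! : ℂ))
  have hexp : HasSum (fun m : ℕ => w ^ m / (m ! : ℂ)) (exp w) := by
    rw [exp_eq_exp_ℂ]
    exact NormedSpace.expSeries_div_hasSum_exp w
  have hS₀ : ∑' m : ℕ, w ^ m / Complex.Gamma (0 + m + 1) = exp w := by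
    simpa only [zero_add, Complex.Gamma_nat_eq_factorial] using hexp.tsum_eq
  have hS' : HasSum (fun m : ℕ => w ^ m * ((γ - harmonic m) / m !)) (exp w * (γ + T)) := by
    have h := (hexp.mul_left (γ : ℂ)).sub (hasSum_harmonic_mul_pow_div_factorial w)
    rw [show γ * exp w - -(T * exp w) = exp w * (γ + T) by ring] at h
    exact h.congr_fun fun m => by ring
  have h := (hasStrictDerivAt_const_cpow (y := 0) (Or.inl hw)).hasDerivAt.mul
    ((hasDerivAt_tsum_pow_div_Gamma w).const_mul (exp (-w)))
  have he : exp (-w) * exp w = 1 := by rw [← Complex.exp_add, neg_add_cancel, Complex.exp_zero]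
  refine h.congr_deriv ?_
  rw [hS₀, hS'.tsum_eq, cpow_zero, Gamma0]
  linear_combination (log w + γ + T) * he

/-- The limit `lim_{a→0} (P(a,w) - P(-a,w))/sin(πa) = -(2/π) Γ(0,w)`
(formula (3.5) of the paper). -/
theorem Pgamma_diff_div_sin_tendsto (w : ℂ) (hw : w ∈ Complex.slitPlane) :
    Filter.Tendsto (fun a : ℂ => (Pgamma a w - Pgamma (-a) w) / Complex.sin ((π : ℂ) * a))
      (𝓝[≠] 0) (𝓝 (-(2 / (π : ℂ)) * Gamma0 w)) := by
  have hsin : HasDerivAt (fun a : ℂ => Complex.sin (π * a)) π 0 := by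
    simpa using ((hasDerivAt_id (0 : ℂ)).const_mul (π : ℂ)).csin
  convert tendsto_div_nhdsNE_of_hasDerivAt
    (hasDerivAt_Pgamma_zero (slitPlane_ne_zero hw)).sub_comp_neg hsin (by simp) (by simp)
    (ofReal_ne_zero.mpr pi_ne_zero) using 2
  ring
end
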